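/- For $\epsilon = 1$ with $J_1 = (\mathcal{P}\otimes I)Q_1$ as above, one has $J_1^2 = 16g^4 (H^1)^2 + 8g^2(4g^4 + 2g^2 + \Delta^2) H^1 + (16g^8 + 16g^6 + 8g^4\Delta^2 + 4g^2\Delta^2 + \Delta^4 + \Delta^2) I$. -/

import Mathlib

open Polynomial

noncomputable section

/-- The space of operators on `ℂ[x]`. -/
abbrev E := Module.End ℂ (Polynomial ℂ)

/-- Annihilation operator `a = d/dx`. -/
def opA : E := Polynomial.derivative

/-- Creation operator `a† = ` multiplication by `x`. -/
def opC : E := LinearMap.mulLeft ℂ (X : Polynomial ℂ)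

/-- Parity operator `(𝒫 f)(x) = f(-x)`. -/
def opP : E := (aeval (-X : Polynomial ℂ)).toLinearMap

/-- `2×2` matrices of operators, i.e. operators on `ℂ[x] ⊗ ℂ²`. -/
abbrev M2 := Matrix (Fin 2) (Fin 2) E

/-- The asymmetric quantum Rabi Hamiltonian
`H^ε = a†a + Δ σx + g (a+a†) σz + ε σz`. -/
def Hop (g Δ ε : ℝ) : M2 :=
  !![opC * opA + (g : ℂ) • (opA + opC) + (ε : ℂ) • 1, (Δ : ℂ) • 1;
     (Δ : ℂ) • 1, opC * opA - (g : ℂ) • (opA + opC) - (ε : ℂ) • 1]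

/-- The parity operator `𝒫 ⊗ I` on `ℂ[x] ⊗ ℂ²`. -/
def Pm : M2 := !![opP, 0; 0, opP]

end

/-- The matrix `Q₁` for `ε = 1`. -/
noncomputable def Q1 (g Δ : ℝ) : M2 :=
  !![-(2 * g * Δ : ℂ) • opA + (2 * g * Δ : ℂ) • opC + (4 * g^2 * Δ + Δ : ℂ) • 1,
       (4 * g^2 : ℂ) • (opA * opA) - (8 * g^3 : ℂ) • opA + (4 * g^4 + Δ^2 : ℂ) • 1;
     (4 * g^2 : ℂ) • (opC * opC) + (8 * g^3 : ℂ) • opC + (4 * g^4 + Δ^2 : ℂ) • 1,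
       -(2 * g * Δ : ℂ) • opA + (2 * g * Δ : ℂ) • opC + (4 * g^2 * Δ - Δ : ℂ) • 1]

/-! Since `𝒫` anticommutes with `a` and `a†` and `𝒫² = 1`, conjugation by `𝒫` amounts to
`g ↦ -g` in `Q₁`, so `J₁² = (𝒫 Q₁(g) 𝒫) Q₁(g) = Q₁(-g) Q₁(g)`. The latter is a polynomial identity
in `a, a†`, checked entrywise after normal ordering with `a a† = a† a + 1`. -/

lemma opA_mul_opC : opA * opC = opC * opA + 1 := by
  refine LinearMap.ext fun p => ?_
  simp [opA, opC, Module.End.mul_apply, derivative_mul, add_comm]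

lemma opA_mul_opC_mul (x : E) : opA * (opC * x) = opC * (opA * x) + x := by
  rw [← mul_assoc, opA_mul_opC, add_mul, one_mul, mul_assoc]

lemma opP_mul_opP : opP * opP = 1 := by
  refine LinearMap.ext fun p => ?_
  simp [opP, Module.End.mul_apply, ← comp_eq_aeval, comp_assoc]

lemma opP_mul_opA_mul (x : E) : opP * (opA * x) = -(opA * (opP * x)) := by
  refine LinearMap.ext fun p => ?_
  simp [opP, opA, Module.End.mul_apply, ← comp_eq_aeval, derivative_comp]

lemma opP_mul_opC_mul (x : E) : opP * (opC * x) = -(opC * (opP * x)) := by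
  refine LinearMap.ext fun p => ?_
  simp [opP, opC, Module.End.mul_apply]

lemma Pm_mul_Q1_mul_Pm (g Δ : ℝ) : Pm * Q1 g Δ * Pm = Q1 (-g) Δ := by
  ext i j : 1
  fin_cases i <;> fin_cases j <;>
  · simp only [Pm, Q1, Matrix.mul_apply, Fin.sum_univ_two, Matrix.of_apply, Matrix.cons_val',
      Matrix.cons_val_zero, Matrix.cons_val_one, Matrix.empty_val', Matrix.cons_val_fin_one,
      Fin.isValue]
    push_cast
    -- `neg_mul` and `mul_neg` need `α := E` to unify with the multiplication of `Module.End`.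
    simp only [mul_add, add_mul, mul_sub, sub_mul, zero_mul, mul_zero, mul_smul_comm,
      smul_mul_assoc, mul_assoc, neg_mul (α := E), mul_neg (α := E), opP_mul_opA_mul,
      opP_mul_opC_mul, opP_mul_opP, mul_one]
    module

lemma Q1_neg_mul_Q1 (g Δ : ℝ) :
    Q1 (-g) Δ * Q1 g Δ =
      ((16 * g^4 : ℝ) : ℂ) • (Hop g Δ 1 * Hop g Δ 1) +
        ((8 * g^2 * (4 * g^4 + 2 * g^2 + Δ^2) : ℝ) : ℂ) • Hop g Δ 1 +
        ((16 * g^8 + 16 * g^6 + 8 * g^4 * Δ^2 + 4 * g^2 * Δ^2 + Δ^4 + Δ^2 : ℝ) : ℂ) •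
          (1 : M2) := by
  ext i j : 1
  fin_cases i <;> fin_cases j <;>
  · simp only [Q1, Hop, Matrix.one_fin_two, Matrix.mul_apply, Fin.sum_univ_two,
      Matrix.smul_apply, Matrix.add_apply, Matrix.of_apply, Matrix.cons_val', Matrix.cons_val_zero,
      Matrix.cons_val_one, Matrix.empty_val', Matrix.cons_val_fin_one, Fin.isValue]
    push_cast
    simp only [mul_add, add_mul, mul_sub, sub_mul, smul_add, smul_sub, smul_mul_assoc,
      mul_smul_comm, smul_smul, mul_one, one_mul, mul_assoc, opA_mul_opC_mul, opA_mul_opC]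
    module

/-- `J₁² = 16g⁴ (H¹)² + 8g²(4g⁴+2g²+Δ²) H¹ + (16g⁸+16g⁶+8g⁴Δ²+4g²Δ²+Δ⁴+Δ²) I`. -/
theorem J1_sq (g Δ : ℝ) :
    (Pm * Q1 g Δ) * (Pm * Q1 g Δ) =
      ((16 * g^4 : ℝ) : ℂ) • (Hop g Δ 1 * Hop g Δ 1) +
        ((8 * g^2 * (4 * g^4 + 2 * g^2 + Δ^2) : ℝ) : ℂ) • Hop g Δ 1 +
        ((16 * g^8 + 16 * g^6 + 8 * g^4 * Δ^2 + 4 * g^2 * Δ^2 + Δ^4 + Δ^2 : ℝ) : ℂ) •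
          (1 : M2) := by
  rw [← Q1_neg_mul_Q1, ← Pm_mul_Q1_mul_Pm, ← mul_assoc]
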